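/- For a ∈ (0,1/2), with e^{iθ} := 1 - α² - iβ (which has modulus 1 since (1-α²)² + β² = 1), the Akhmediev breather satisfies lim_{t→±∞} sup_{x∈ℝ} |B_A(t,x) - e^{±iθ} e^{it}| = 0. -/

import Mathlib

open Complex

/-- Partial derivative in the first (time) variable. -/
noncomputable def pdt (u : ℝ → ℝ → ℂ) (t x : ℝ) : ℂ := deriv (fun s => u s x) t

/-- Partial derivative in the second (space) variable. -/
noncomputable def pdx (u : ℝ → ℝ → ℂ) (t x : ℝ) : ℂ := deriv (fun y => u t y) x

/-- `u` solves the cubic focusing NLS `i u_t + u_xx + |u|² u = 0`. -/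
def IsNLSSolution (u : ℝ → ℝ → ℂ) : Prop :=
  ∀ t x : ℝ, Complex.I * pdt u t x + pdx (pdx u) t x
    + ((‖u t x‖ : ℂ))^2 * u t x = 0

/-- Parameter `α` of the Akhmediev breather. -/
noncomputable def Aalpha (a : ℝ) : ℝ := Real.sqrt (2 * (1 - 2 * a))

/-- Parameter `β` of the Akhmediev breather. -/
noncomputable def Abeta (a : ℝ) : ℝ := Real.sqrt (8 * a * (1 - 2 * a))

/-- The Akhmediev breather with parameter `a ∈ (0, 1/2)`. -/
noncomputable def BA (a : ℝ) (t x : ℝ) : ℂ :=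
  Complex.exp (Complex.I * t) *
    (1 + (((Aalpha a : ℂ))^2 * Real.cosh (Abeta a * t)
        + Complex.I * (Abeta a) * Real.sinh (Abeta a * t)) /
      ((Real.sqrt (2 * a) : ℂ) * Real.cos (Aalpha a * x) - (Real.cosh (Abeta a * t) : ℂ)))

open Filter Topology ComplexConjugate

/-! Since `cosh y - sinh y = exp (-y)`, the deviation of `B_A` from the phase `e^{iθ} e^{it}` is
`e^{it} ((α² + iβ) √(2a) cos αx - iβ e^{-βt}) / (√(2a) cos αx - cosh βt)`. As `√(2a) < 1`, its
modulus is bounded for `t ≥ 0`, uniformly in `x`, by a constant over `cosh βt - √(2a)`. The limit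
`t → -∞` follows from the symmetry `B_A(-t, x) = conj B_A(t, x)`. -/

lemma tendsto_iSup_nhds_zero_of_le {α ι : Type*} [Nonempty ι] {l : Filter α} {f : α → ι → ℝ}
    {g : α → ℝ} (hf : ∀ t i, 0 ≤ f t i) (hfg : ∀ᶠ t in l, ∀ i, f t i ≤ g t)
    (hg : Tendsto g l (𝓝 0)) : Tendsto (fun t => ⨆ i, f t i) l (𝓝 0) :=
  squeeze_zero' (.of_forall fun t => Real.iSup_nonneg (hf t)) (hfg.mono fun _ h => ciSup_le h) hg

lemma Real.tendsto_cosh_atTop : Tendsto Real.cosh atTop atTop := by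
  refine tendsto_atTop_mono (fun y => ?_) (Real.tendsto_exp_atTop.atTop_div_const two_pos)
  rw [Real.cosh_eq]
  linarith [Real.exp_pos (-y)]

lemma Aalpha_sq {a : ℝ} (ha : a ≤ 1 / 2) : Aalpha a ^ 2 = 2 * (1 - 2 * a) :=
  Real.sq_sqrt (by linarith)

lemma Abeta_sq {a : ℝ} (ha : a ∈ Set.Icc (0 : ℝ) (1 / 2)) : Abeta a ^ 2 = 8 * a * (1 - 2 * a) :=
  Real.sq_sqrt (by nlinarith [ha.1, ha.2])

lemma Abeta_nonneg (a : ℝ) : 0 ≤ Abeta a :=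
  Real.sqrt_nonneg _

lemma Abeta_pos {a : ℝ} (ha : a ∈ Set.Ioo (0 : ℝ) (1 / 2)) : 0 < Abeta a :=
  Real.sqrt_pos.mpr (by nlinarith [ha.1, ha.2])

lemma norm_one_sub_Aalpha_sq_sub_I_mul_Abeta {a : ℝ} (ha : a ∈ Set.Icc (0 : ℝ) (1 / 2)) :
    ‖(1 : ℂ) - (Aalpha a)^2 - Complex.I * (Abeta a)‖ = 1 := by
  rw [Complex.norm_eq_sqrt_sq_add_sq, Real.sqrt_eq_one]
  simp only [← Complex.ofReal_pow, Complex.sub_re, Complex.sub_im, Complex.one_re, Complex.one_im,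
    Complex.ofReal_re, Complex.ofReal_im, Complex.mul_re, Complex.mul_im, Complex.I_re, Complex.I_im]
  nlinarith [Aalpha_sq ha.2, Abeta_sq ha]

lemma BA_neg (a t x : ℝ) : BA a (-t) x = conj (BA a t x) := by
  simp only [BA, map_mul, map_add, map_sub, map_div₀, map_one, map_pow, ← Complex.exp_conj,
    Complex.conj_ofReal, Complex.conj_I, Complex.ofReal_neg, mul_neg, neg_mul, Real.cosh_neg,
    Real.sinh_neg]

lemma sqrt_two_mul_lt_one {a : ℝ} (ha : a < 1 / 2) : Real.sqrt (2 * a) < 1 :=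
  (Real.sqrt_lt' one_pos).mpr (by linarith)

lemma BA_sub_phase_eq {a : ℝ} (ha : a < 1 / 2) (t x : ℝ) :
    BA a t x - ((1 : ℂ) - (Aalpha a)^2 - Complex.I * (Abeta a)) * Complex.exp (Complex.I * t)
      = Complex.exp (Complex.I * t) *
        ((((Aalpha a : ℂ)^2 + Complex.I * (Abeta a)) * (Real.sqrt (2 * a) * Real.cos (Aalpha a * x))
            - Complex.I * (Abeta a) * Real.exp (-(Abeta a * t))) /
          (Real.sqrt (2 * a) * Real.cos (Aalpha a * x) - Real.cosh (Abeta a * t) : ℝ)) := by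
  have hD : Real.sqrt (2 * a) * Real.cos (Aalpha a * x) - Real.cosh (Abeta a * t) ≠ 0 := by
    nlinarith [sqrt_two_mul_lt_one ha, Real.sqrt_nonneg (2 * a), Real.cos_le_one (Aalpha a * x),
      Real.neg_one_le_cos (Aalpha a * x), Real.one_le_cosh (Abeta a * t)]
  have hD' : ((Real.sqrt (2 * a) * Real.cos (Aalpha a * x) - Real.cosh (Abeta a * t) : ℝ) : ℂ) ≠ 0 :=
    Complex.ofReal_ne_zero.mpr hD
  rw [BA, ← Real.cosh_sub_sinh]
  generalize Real.cosh (Abeta a * t) = C at hD' ⊢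
  push_cast at hD' ⊢
  field_simp
  ring

lemma norm_BA_sub_phase_le {a : ℝ} (ha : a < 1 / 2) {t : ℝ} (ht : 0 ≤ t) (x : ℝ) :
    ‖BA a t x - ((1 : ℂ) - (Aalpha a)^2 - Complex.I * (Abeta a)) * Complex.exp (Complex.I * t)‖
      ≤ (‖(Aalpha a : ℂ)^2 + Complex.I * (Abeta a)‖ + Abeta a) /
        (Real.cosh (Abeta a * t) - Real.sqrt (2 * a)) := by
  have hs := sqrt_two_mul_lt_one ha
  have hcos : |Real.sqrt (2 * a) * Real.cos (Aalpha a * x)| ≤ Real.sqrt (2 * a) := by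
    rw [abs_mul, abs_of_nonneg (Real.sqrt_nonneg _)]
    exact mul_le_of_le_one_right (Real.sqrt_nonneg _) (Real.abs_cos_le_one _)
  have hexp : Real.exp (-(Abeta a * t)) ≤ 1 :=
    Real.exp_le_one_iff.mpr (neg_nonpos.mpr (mul_nonneg (Abeta_nonneg a) ht))
  have hgap : 0 < Real.cosh (Abeta a * t) - Real.sqrt (2 * a) := by
    linarith [Real.one_le_cosh (Abeta a * t)]
  have hden : Real.cosh (Abeta a * t) - Real.sqrt (2 * a)
      ≤ |Real.sqrt (2 * a) * Real.cos (Aalpha a * x) - Real.cosh (Abeta a * t)| := by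
    rw [abs_sub_comm]
    exact (sub_le_sub_left (abs_le.mp hcos).2 _).trans (le_abs_self _)
  have hnum : ‖((Aalpha a : ℂ)^2 + Complex.I * (Abeta a)) *
        (Real.sqrt (2 * a) * Real.cos (Aalpha a * x) : ℝ)
        - Complex.I * (Abeta a) * Real.exp (-(Abeta a * t))‖
      ≤ ‖(Aalpha a : ℂ)^2 + Complex.I * (Abeta a)‖ + Abeta a := by
    refine (norm_sub_le _ _).trans (add_le_add ?_ ?_)
    · rw [norm_mul, Complex.norm_real, Real.norm_eq_abs]
      exact mul_le_of_le_one_right (norm_nonneg _) (hcos.trans hs.le)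
    · rw [norm_mul, norm_mul, Complex.norm_I, one_mul, Complex.norm_real, Complex.norm_real,
        Real.norm_of_nonneg (Abeta_nonneg a), Real.norm_of_nonneg (Real.exp_pos _).le]
      exact mul_le_of_le_one_right (Abeta_nonneg a) hexp
  rw [BA_sub_phase_eq ha, norm_mul, Complex.norm_exp_I_mul_ofReal, one_mul, norm_div,
    Complex.norm_real, Real.norm_eq_abs]
  exact div_le_div₀ (add_nonneg (norm_nonneg _) (Abeta_nonneg a)) (by exact_mod_cast hnum) hgap hden

lemma norm_BA_sub_conj_phase (a t x : ℝ) :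
    ‖BA a t x - ((1 : ℂ) - (Aalpha a)^2 + Complex.I * (Abeta a)) * Complex.exp (Complex.I * t)‖
      = ‖BA a (-t) x
          - ((1 : ℂ) - (Aalpha a)^2 - Complex.I * (Abeta a)) * Complex.exp (Complex.I * ↑(-t))‖ := by
  rw [← neg_neg t, BA_neg, neg_neg, ← Complex.norm_conj (_ - _)]
  simp only [map_sub, map_mul, map_add, map_one, map_pow, ← Complex.exp_conj, Complex.conj_ofReal,
    Complex.conj_I, Complex.conj_conj, Complex.ofReal_neg, neg_mul, mul_neg, ← sub_eq_add_neg]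

lemma tendsto_iSup_norm_BA_sub_phase_atTop {a : ℝ} (ha : a ∈ Set.Ioo (0 : ℝ) (1 / 2)) :
    Tendsto (fun t : ℝ => ⨆ x : ℝ,
        ‖BA a t x
          - ((1 : ℂ) - (Aalpha a)^2 - Complex.I * (Abeta a)) * Complex.exp (Complex.I * t)‖)
      atTop (𝓝 0) := by
  have hcosh : Tendsto (fun t => Real.cosh (Abeta a * t) - Real.sqrt (2 * a)) atTop atTop :=
    tendsto_atTop_add_const_right _ _
      (Real.tendsto_cosh_atTop.comp (tendsto_id.const_mul_atTop (Abeta_pos ha)))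
  exact tendsto_iSup_nhds_zero_of_le (fun _ _ => norm_nonneg _)
    ((eventually_ge_atTop 0).mono fun t ht x => norm_BA_sub_phase_le ha.2 ht x)
    (tendsto_const_nhds.div_atTop hcosh)

theorem akhmediev_asymptotic_phase (a : ℝ) (ha : a ∈ Set.Ioo (0:ℝ) (1/2)) :
    ‖(1 : ℂ) - (Aalpha a)^2 - Complex.I * (Abeta a)‖ = 1 ∧
    Filter.Tendsto (fun t : ℝ => ⨆ x : ℝ,
        ‖BA a t x
          - ((1 : ℂ) - (Aalpha a)^2 - Complex.I * (Abeta a)) * Complex.exp (Complex.I * t)‖)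
      Filter.atTop (nhds 0) ∧
    Filter.Tendsto (fun t : ℝ => ⨆ x : ℝ,
        ‖BA a t x
          - ((1 : ℂ) - (Aalpha a)^2 + Complex.I * (Abeta a)) * Complex.exp (Complex.I * t)‖)
      Filter.atBot (nhds 0) := by
  refine ⟨norm_one_sub_Aalpha_sq_sub_I_mul_Abeta ⟨ha.1.le, ha.2.le⟩,
    tendsto_iSup_norm_BA_sub_phase_atTop ha, ?_⟩
  refine ((tendsto_iSup_norm_BA_sub_phase_atTop ha).comp tendsto_neg_atBot_atTop).congr fun t => ?_
  simp only [Function.comp_apply, norm_BA_sub_conj_phase]
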